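/- arXiv:2007.08904 — 5 statements merged into one kernel-verified Lean document; each statement's English description precedes it below -/
import Mathlib

section
/- Let A : ℝ^{n×n} → ℝ^m be a linear map satisfying the rank-2r restricted isometry property with constant δ ∈ (0,1): (1−δ)‖X‖_F² ≤ ‖A X‖₂² ≤ (1+δ)‖X‖_F² for all X with rank(X) ≤ 2r. If P is an orthogonal projector onto a subspace S of ℝ^{n×n} all of whose elements have rank at most 2r, then the operator norm of P − P∘A*∘A∘P is at most δ, where A* is the adjoint of A. -/
open Matrix
open scoped RealInnerProductSpace

noncomputable def frobNorm {p q : ℕ} (A : Matrix (Fin p) (Fin q) ℝ) : ℝ :=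
  Real.sqrt (∑ i, ∑ j, (A i j) ^ 2)

noncomputable def specNorm {p q : ℕ} (A : Matrix (Fin p) (Fin q) ℝ) : ℝ :=
  ‖LinearMap.toContinuousLinearMap (Matrix.toEuclideanLin A)‖

noncomputable def frobInner {p q : ℕ} (A B : Matrix (Fin p) (Fin q) ℝ) : ℝ :=
  (Aᵀ * B).trace

/-! Let `D X Y = ⟪X, Y⟫_F - ⟪A X, A Y⟫`. This symmetric form satisfies `|D W W| ≤ δ ‖W‖_F²` on
the range `S` of `P` by the RIP, and polarization followed by a discriminant argument upgrades this
to `D U V ^ 2 ≤ δ² ‖U‖_F² ‖V‖_F²` on `S`. For `U = P Z` the matrix `M = U - P A* A U` lies in `S`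
and `‖M‖_F² = D U M`, hence `‖M‖_F ≤ δ ‖U‖_F ≤ δ ‖Z‖_F`. -/

namespace LinearMap.BilinForm

variable {E : Type*} [AddCommGroup E] [Module ℝ E] {B Q : LinearMap.BilinForm ℝ E}
  {S : Submodule ℝ E}

theorem two_mul_apply_le_of_abs_apply_self_le (hB : B.IsSymm)
    (h : ∀ w ∈ S, |B w w| ≤ Q w w) {u v : E} (hu : u ∈ S) (hv : v ∈ S) :
    2 * B u v ≤ Q u u + Q v v := by
  have hadd := (abs_le.mp (h _ (S.add_mem hu hv))).2
  have hsub := (abs_le.mp (h _ (S.sub_mem hu hv))).1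
  simp only [map_add, map_sub, LinearMap.add_apply, LinearMap.sub_apply, hB.eq v u] at hadd hsub
  linarith

theorem apply_sq_le_of_abs_apply_self_le (hB : B.IsSymm)
    (h : ∀ w ∈ S, |B w w| ≤ Q w w) {u v : E} (hu : u ∈ S) (hv : v ∈ S) :
    B u v ^ 2 ≤ Q u u * Q v v := by
  have hquad : ∀ t : ℝ, 0 ≤ Q v v * (t * t) + (-2 * B u v) * t + Q u u := fun t => by
    have := two_mul_apply_le_of_abs_apply_self_le hB h hu (S.smul_mem t hv)
    simp only [map_smul, LinearMap.smul_apply, smul_eq_mul] at this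
    linarith
  have := discrim_le_zero hquad
  rw [discrim] at this
  linarith

theorem apply_map_self_le_of_isIdempotentElem (hQ : ∀ w, 0 ≤ Q w w) {P : E →ₗ[ℝ] E}
    (hP : IsIdempotentElem P) (hPQ : ∀ x y, Q (P x) y = Q x (P y)) (z : E) :
    Q (P z) (P z) ≤ Q z z := by
  have hPP : P (P z) = P z := LinearMap.congr_fun hP z
  have hPz : Q (P z) (P z) = Q z (P z) := by rw [hPQ, hPP]
  have := hQ (z - P z)
  simp only [map_sub, LinearMap.sub_apply, hPQ z z] at this
  linarith

end LinearMap.BilinForm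

section Frobenius

variable {p q : ℕ}

theorem frobInner_comm (X Y : Matrix (Fin p) (Fin q) ℝ) : frobInner X Y = frobInner Y X := by
  rw [frobInner, frobInner, ← trace_transpose, transpose_mul, transpose_transpose]

theorem frobInner_self (X : Matrix (Fin p) (Fin q) ℝ) : frobInner X X = frobNorm X ^ 2 := by
  rw [frobNorm, Real.sq_sqrt (by positivity), frobInner, trace, Finset.sum_comm]
  simp only [diag_apply, mul_apply, transpose_apply, sq]

theorem frobNorm_nonneg (X : Matrix (Fin p) (Fin q) ℝ) : 0 ≤ frobNorm X := Real.sqrt_nonneg _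

variable (p q) in
noncomputable def frobForm : LinearMap.BilinForm ℝ (Matrix (Fin p) (Fin q) ℝ) :=
  LinearMap.mk₂ ℝ frobInner
    (fun X X' Y => by simp only [frobInner, transpose_add, Matrix.add_mul, trace_add])
    (fun c X Y => by simp only [frobInner, transpose_smul, smul_mul, trace_smul, smul_eq_mul])
    (fun X Y Y' => by simp only [frobInner, Matrix.mul_add, trace_add])
    (fun c X Y => by simp only [frobInner, Matrix.mul_smul, trace_smul, smul_eq_mul])

@[simp]
theorem frobForm_apply (X Y : Matrix (Fin p) (Fin q) ℝ) : frobForm p q X Y = frobInner X Y := rfl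

variable {F : Type*} [NormedAddCommGroup F] [InnerProductSpace ℝ F]

noncomputable def isometryDefect (A : Matrix (Fin p) (Fin q) ℝ →ₗ[ℝ] F) :
    LinearMap.BilinForm ℝ (Matrix (Fin p) (Fin q) ℝ) :=
  frobForm p q - (innerₗ F).compl₁₂ A A

theorem isometryDefect_apply (A : Matrix (Fin p) (Fin q) ℝ →ₗ[ℝ] F)
    (X Y : Matrix (Fin p) (Fin q) ℝ) :
    isometryDefect A X Y = frobInner X Y - ⟪A X, A Y⟫ := rfl

theorem isometryDefect_isSymm (A : Matrix (Fin p) (Fin q) ℝ →ₗ[ℝ] F) :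
    (isometryDefect A).IsSymm :=
  ⟨fun X Y => by rw [isometryDefect_apply, isometryDefect_apply, frobInner_comm, real_inner_comm]⟩

theorem abs_isometryDefect_self_le {A : Matrix (Fin p) (Fin q) ℝ →ₗ[ℝ] F} {δ : ℝ}
    {X : Matrix (Fin p) (Fin q) ℝ} (h : (1 - δ) * frobNorm X ^ 2 ≤ ‖A X‖ ^ 2 ∧
      ‖A X‖ ^ 2 ≤ (1 + δ) * frobNorm X ^ 2) :
    |isometryDefect A X X| ≤ (δ • frobForm p q) X X := by
  rw [isometryDefect_apply, real_inner_self_eq_norm_sq, LinearMap.smul_apply,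
    LinearMap.smul_apply, frobForm_apply, frobInner_self, smul_eq_mul, abs_le]
  constructor <;> linarith [h.1, h.2]

theorem frobInner_sub_map_adjoint {A : Matrix (Fin p) (Fin q) ℝ →ₗ[ℝ] F}
    {Astar : F →ₗ[ℝ] Matrix (Fin p) (Fin q) ℝ} (hadj : ∀ X v, ⟪A X, v⟫ = frobInner (Astar v) X)
    {P : Matrix (Fin p) (Fin q) ℝ →ₗ[ℝ] Matrix (Fin p) (Fin q) ℝ}
    (hself : ∀ X Y, frobInner (P X) Y = frobInner X (P Y)) (x : Matrix (Fin p) (Fin q) ℝ)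
    {Y : Matrix (Fin p) (Fin q) ℝ} (hY : P Y = Y) :
    frobInner (x - P (Astar (A x))) Y = isometryDefect A x Y := by
  rw [← frobForm_apply, map_sub, LinearMap.sub_apply, frobForm_apply, frobForm_apply, hself, hY,
    ← hadj, real_inner_comm, isometryDefect_apply]

end Frobenius

theorem rip_projected_operator_norm_general {n m r : ℕ} {δ : ℝ} (hδ0 : 0 < δ)
    (A : Matrix (Fin n) (Fin n) ℝ →ₗ[ℝ] EuclideanSpace ℝ (Fin m))
    (Astar : EuclideanSpace ℝ (Fin m) →ₗ[ℝ] Matrix (Fin n) (Fin n) ℝ)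
    (hadj : ∀ (X : Matrix (Fin n) (Fin n) ℝ) (v : EuclideanSpace ℝ (Fin m)),
      ⟪A X, v⟫ = frobInner (Astar v) X)
    (hRIP : ∀ X : Matrix (Fin n) (Fin n) ℝ, X.rank ≤ 2 * r →
      (1 - δ) * (frobNorm X) ^ 2 ≤ ‖A X‖ ^ 2 ∧ ‖A X‖ ^ 2 ≤ (1 + δ) * (frobNorm X) ^ 2)
    (P : Matrix (Fin n) (Fin n) ℝ →ₗ[ℝ] Matrix (Fin n) (Fin n) ℝ)
    (hidem : P ∘ₗ P = P)
    (hself : ∀ X Y : Matrix (Fin n) (Fin n) ℝ, frobInner (P X) Y = frobInner X (P Y))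
    (hrank : ∀ X : Matrix (Fin n) (Fin n) ℝ, (P X).rank ≤ 2 * r) :
    ∀ Z : Matrix (Fin n) (Fin n) ℝ,
      frobNorm (P Z - P (Astar (A (P Z)))) ≤ δ * frobNorm Z := by
  intro Z
  have hfix : ∀ w ∈ LinearMap.range P, P w = w := by
    rintro _ ⟨w, rfl⟩
    exact LinearMap.congr_fun hidem w
  set u := P Z
  set M := u - P (Astar (A u))
  have hu : u ∈ LinearMap.range P := LinearMap.mem_range_self P Z
  have hM : M ∈ LinearMap.range P := ⟨Z - Astar (A u), by rw [map_sub]⟩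
  have hMM : frobInner M M = isometryDefect A u M :=
    frobInner_sub_map_adjoint hadj hself u (hfix M hM)
  have hdom : ∀ w ∈ LinearMap.range P, |isometryDefect A w w| ≤ (δ • frobForm n n) w w := by
    rintro _ ⟨w, rfl⟩
    exact abs_isometryDefect_self_le (hRIP _ (hrank w))
  have hCS := LinearMap.BilinForm.apply_sq_le_of_abs_apply_self_le
    (isometryDefect_isSymm A) hdom hu hM
  have hPZ := LinearMap.BilinForm.apply_map_self_le_of_isIdempotentElem
    (Q := frobForm n n) (fun w => by rw [frobForm_apply, frobInner_self]; positivity) hidem hself Z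
  simp only [← hMM, LinearMap.smul_apply, frobForm_apply, smul_eq_mul, frobInner_self] at hCS hPZ
  refine (pow_le_pow_iff_left₀ (frobNorm_nonneg M) (mul_nonneg hδ0.le (frobNorm_nonneg Z))
    two_ne_zero).mp ?_
  calc frobNorm M ^ 2 ≤ δ ^ 2 * frobNorm u ^ 2 := by
        nlinarith [sq_nonneg (frobNorm M), sq_nonneg (δ * frobNorm u)]
    _ ≤ δ ^ 2 * frobNorm Z ^ 2 := by gcongr
    _ = (δ * frobNorm Z) ^ 2 := by ring

/-- if `A` satisfies the rank-`2r` RIP with constant `δ` and `P` is an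
orthogonal projector (w.r.t. the Frobenius inner product) whose range consists of matrices
of rank at most `2r`, then the operator norm of `P − P∘A*∘A∘P` is at most `δ`. -/
theorem rip_projected_operator_norm {n m r : ℕ} {δ : ℝ} (hδ0 : 0 < δ) (hδ1 : δ < 1)
    (A : Matrix (Fin n) (Fin n) ℝ →ₗ[ℝ] EuclideanSpace ℝ (Fin m))
    (Astar : EuclideanSpace ℝ (Fin m) →ₗ[ℝ] Matrix (Fin n) (Fin n) ℝ)
    (hadj : ∀ (X : Matrix (Fin n) (Fin n) ℝ) (v : EuclideanSpace ℝ (Fin m)),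
      ⟪A X, v⟫ = frobInner (Astar v) X)
    (hRIP : ∀ X : Matrix (Fin n) (Fin n) ℝ, X.rank ≤ 2 * r →
      (1 - δ) * (frobNorm X) ^ 2 ≤ ‖A X‖ ^ 2 ∧ ‖A X‖ ^ 2 ≤ (1 + δ) * (frobNorm X) ^ 2)
    (P : Matrix (Fin n) (Fin n) ℝ →ₗ[ℝ] Matrix (Fin n) (Fin n) ℝ)
    (hidem : P ∘ₗ P = P)
    (hself : ∀ X Y : Matrix (Fin n) (Fin n) ℝ, frobInner (P X) Y = frobInner X (P Y))
    (hrank : ∀ X : Matrix (Fin n) (Fin n) ℝ, (P X).rank ≤ 2 * r) :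
    ∀ Z : Matrix (Fin n) (Fin n) ℝ,
      frobNorm (P Z - P (Astar (A (P Z)))) ≤ δ * frobNorm Z :=
  rip_projected_operator_norm_general hδ0 A Astar hadj hRIP P hidem hself hrank
end

section
/- Let A : H → ℝ^m be linear on a finite-dimensional inner product space H, and let P be an orthogonal projector such that ‖A(Pz)‖₂² ≤ (1+δ)‖Pz‖² for all z ∈ H, and such that ‖A w‖₂ ≤ √(1+δ)‖w‖ for a fixed vector w ∈ H. Then ‖P A* A w‖ ≤ (1+δ)‖w‖, where A* is the adjoint of A. -/
open scoped RealInnerProductSpace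

/-!
With `x := P (A* y)`, symmetry and idempotence of `P` give
`‖x‖² = ⟪A* y, P x⟫ = ⟪y, A (P x)⟫ ≤ ‖y‖ * ‖A (P x)‖ ≤ √(1+δ) ‖y‖ ‖x‖`,
so `‖P A* y‖ ≤ √(1+δ) ‖y‖`. Taking `y := A w` and using `‖A w‖ ≤ √(1+δ) ‖w‖`
gives the second factor `√(1+δ)`.
-/

namespace LinearMap

variable {E F : Type*} [NormedAddCommGroup E] [InnerProductSpace ℝ E]
  [NormedAddCommGroup F] [InnerProductSpace ℝ F]

theorem IsSymmetricProjection.norm_sq_apply_eq_real_inner {P : E →ₗ[ℝ] E}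
    (hP : P.IsSymmetricProjection) (x : E) : ‖P x‖ ^ 2 = ⟪x, P x⟫ := by
  rw [← real_inner_self_eq_norm_sq, hP.isSymmetric, ← Module.End.mul_apply,
    hP.isIdempotentElem.eq]

theorem IsSymmetricProjection.norm_apply_adjoint_le [FiniteDimensional ℝ E]
    [FiniteDimensional ℝ F] {P : E →ₗ[ℝ] E} (hP : P.IsSymmetricProjection) {A : E →ₗ[ℝ] F}
    {c : ℝ} (hc : 0 ≤ c) (hA : ∀ z, ‖A (P z)‖ ≤ c * ‖P z‖) (y : F) :
    ‖P (adjoint A y)‖ ≤ c * ‖y‖ := by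
  set x := P (adjoint A y)
  have hx : ‖x‖ * ‖x‖ ≤ c * ‖y‖ * ‖x‖ :=
    calc ‖x‖ * ‖x‖ = ⟪y, A x⟫ := by
          rw [← sq, hP.norm_sq_apply_eq_real_inner, adjoint_inner_left]
      _ ≤ ‖y‖ * ‖A x‖ := real_inner_le_norm _ _
      _ ≤ ‖y‖ * (c * ‖x‖) := by gcongr; exact hA _
      _ = c * ‖y‖ * ‖x‖ := by ring
  rcases (norm_nonneg x).eq_or_lt with hx0 | hx0
  · rw [← hx0]; positivity
  · exact le_of_mul_le_mul_right hx hx0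

end LinearMap

/-- if `‖A(Pz)‖² ≤ (1+δ)‖Pz‖²` for all `z` and `‖Aw‖ ≤ √(1+δ)‖w‖` for a
fixed `w`, then `‖P A* A w‖ ≤ (1+δ)‖w‖`. -/
theorem projected_adjoint_bound {H : Type*} [NormedAddCommGroup H] [InnerProductSpace ℝ H]
    [FiniteDimensional ℝ H] {m : ℕ} {δ : ℝ} (hδ : 0 < δ)
    (A : H →ₗ[ℝ] EuclideanSpace ℝ (Fin m))
    (P : H →ₗ[ℝ] H) (hidem : P ∘ₗ P = P)
    (hself : ∀ x y : H, ⟪P x, y⟫ = ⟪x, P y⟫)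
    (hPz : ∀ z : H, ‖A (P z)‖ ^ 2 ≤ (1 + δ) * ‖P z‖ ^ 2)
    (w : H) (hw : ‖A w‖ ≤ Real.sqrt (1 + δ) * ‖w‖) :
    ‖P ((LinearMap.adjoint A) (A w))‖ ≤ (1 + δ) * ‖w‖ := by
  have hP : P.IsSymmetricProjection := ⟨hidem, hself⟩
  have hδ' : 0 ≤ 1 + δ := by linarith
  have hAP (z : H) : ‖A (P z)‖ ≤ √(1 + δ) * ‖P z‖ := by
    rw [← pow_le_pow_iff_left₀ (norm_nonneg _) (by positivity) two_ne_zero, mul_pow,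
      Real.sq_sqrt hδ']
    exact hPz z
  calc ‖P (LinearMap.adjoint A (A w))‖ ≤ √(1 + δ) * ‖A w‖ :=
        hP.norm_apply_adjoint_le (by positivity) hAP _
    _ ≤ √(1 + δ) * (√(1 + δ) * ‖w‖) := by gcongr
    _ = (1 + δ) * ‖w‖ := by rw [← mul_assoc, Real.mul_self_sqrt hδ']
end

section
/- Let M_r denote the set of tensors in ℝ^{n₁×…×n_d} of multilinear rank componentwise at most r = (r₁,…,r_d), and let H_r(Y) denote the truncated HOSVD of Y (projecting each mode onto the span of the top r_i left singular vectors of the mode-i unfolding). Then for every Y, ‖Y − H_r(Y)‖_F² ≤ Σ_{i=1}^d ‖Y − P_i Y‖_F², where P_i Y is the best approximation of Y with mode-i rank ≤ r_i; consequently ‖Y − H_r(Y)‖_F ≤ √d · ‖Y − B‖_F for any B of multilinear rank ≤ r. -/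
/-!
For orthogonal projections `p` and `q`, the residual of `p q` splits orthogonally as
`(x - p x) + p (x - q x)`; since `p` is a contraction, Pythagoras gives
`‖x - p q x‖² ≤ ‖x - p x‖² + ‖x - q x‖²`, and induction extends this to any finite product.
Each mode-wise residual is at most `‖Y - B‖`, which yields the factor `√d`.
-/

open scoped RealInnerProductSpace

namespace LinearMap.IsSymmetricProjection

variable {𝕜 E : Type*} [RCLike 𝕜] [NormedAddCommGroup E] [InnerProductSpace 𝕜 E]
  {p : E →ₗ[𝕜] E}

theorem norm_apply_le (hp : p.IsSymmetricProjection) (x : E) : ‖p x‖ ≤ ‖x‖ := by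
  obtain ⟨K, _, rfl⟩ := p.isSymmetricProjection_iff_eq_coe_starProjection.mp hp
  exact K.norm_starProjection_apply_le x

theorem inner_sub_apply_apply_eq_zero (hp : p.IsSymmetricProjection) (x y : E) :
    inner 𝕜 (x - p x) (p y) = 0 := by
  rw [← hp.isSymmetric, map_sub, ← Module.End.mul_apply, hp.isIdempotentElem.eq, sub_self,
    inner_zero_left]

theorem norm_sub_mul_apply_sq_le (hp : p.IsSymmetricProjection) (q : E →ₗ[𝕜] E) (x : E) :
    ‖x - (p * q) x‖ ^ 2 ≤ ‖x - p x‖ ^ 2 + ‖x - q x‖ ^ 2 := by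
  have hsplit : x - (p * q) x = (x - p x) + p (x - q x) := by
    rw [Module.End.mul_apply, map_sub]
    abel
  have hpyth : ‖x - (p * q) x‖ ^ 2 = ‖x - p x‖ ^ 2 + ‖p (x - q x)‖ ^ 2 := by
    simp only [hsplit, sq]
    exact norm_add_sq_eq_norm_sq_add_norm_sq_of_inner_eq_zero _ _
      (hp.inner_sub_apply_apply_eq_zero x _)
  rw [hpyth]
  gcongr
  exact hp.norm_apply_le _

end LinearMap.IsSymmetricProjection

theorem LinearMap.norm_sub_list_prod_apply_sq_le_sum {𝕜 E : Type*} [RCLike 𝕜]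
    [NormedAddCommGroup E] [InnerProductSpace 𝕜 E] {L : List (E →ₗ[𝕜] E)}
    (hL : ∀ p ∈ L, p.IsSymmetricProjection) (x : E) :
    ‖x - L.prod x‖ ^ 2 ≤ (L.map fun p => ‖x - p x‖ ^ 2).sum := by
  induction L with
  | nil => simp
  | cons p L ih =>
    rw [List.prod_cons, List.map_cons, List.sum_cons]
    have hp := hL p List.mem_cons_self
    have hrest := ih fun q hq => hL q (List.mem_cons_of_mem p hq)
    linarith [hp.norm_sub_mul_apply_sq_le L.prod x]

theorem hosvd_quasi_optimal_general {H : Type*} [NormedAddCommGroup H] [InnerProductSpace ℝ H]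
    {d : ℕ}
    (P : Fin d → Module.End ℝ H)
    (hidem : ∀ i, P i * P i = P i)
    (hself : ∀ i (x y : H), ⟪P i x, y⟫ = ⟪x, P i y⟫)
    (Y B : H)
    (hB : ∀ i, ‖Y - P i Y‖ ≤ ‖Y - B‖) :
    ‖Y - ((List.finRange d).map P).prod Y‖ ^ 2 ≤ ∑ i, ‖Y - P i Y‖ ^ 2 ∧
    ‖Y - ((List.finRange d).map P).prod Y‖ ≤ Real.sqrt d * ‖Y - B‖ := by
  have hproj : ∀ p ∈ (List.finRange d).map P, p.IsSymmetricProjection := by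
    simp only [List.mem_map, List.mem_finRange, true_and, forall_exists_index,
      forall_apply_eq_imp_iff]
    exact fun i => ⟨hidem i, hself i⟩
  have hsum : ‖Y - ((List.finRange d).map P).prod Y‖ ^ 2 ≤ ∑ i, ‖Y - P i Y‖ ^ 2 := by
    simpa only [Fin.sum_univ_def, List.map_map, Function.comp_def] using
      LinearMap.norm_sub_list_prod_apply_sq_le_sum hproj Y
  have hsum_le : ∑ i, ‖Y - P i Y‖ ^ 2 ≤ d * ‖Y - B‖ ^ 2 := by
    simpa using Finset.sum_le_sum (s := Finset.univ) fun i _ =>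
      pow_le_pow_left₀ (norm_nonneg _) (hB i) 2
  refine ⟨hsum, ?_⟩
  rw [← Real.sqrt_sq (norm_nonneg (Y - B)), ← Real.sqrt_mul (Nat.cast_nonneg d),
    Real.le_sqrt (norm_nonneg _) (by positivity)]
  exact hsum.trans hsum_le

/-- quasi-optimality of the truncated HOSVD. `P i` is the orthogonal
projection realizing the best mode-`i` approximation of `Y` (projection of mode-`i`
fibres onto the span of the top `rᵢ` left singular vectors of the mode-`i` unfolding);
the `P i` are pairwise commuting orthogonal projectors and `H_r(Y)` is their composition
applied to `Y`. If `B` has multilinear rank at most `r`, so that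
`‖Y − P i Y‖ ≤ ‖Y − B‖` for each `i`, then
`‖Y − H_r(Y)‖² ≤ Σᵢ ‖Y − P i Y‖²` and `‖Y − H_r(Y)‖ ≤ √d ‖Y − B‖`. -/
theorem hosvd_quasi_optimal {H : Type*} [NormedAddCommGroup H] [InnerProductSpace ℝ H]
    [FiniteDimensional ℝ H] {d : ℕ}
    (P : Fin d → Module.End ℝ H)
    (hidem : ∀ i, P i * P i = P i)
    (hself : ∀ i (x y : H), ⟪P i x, y⟫ = ⟪x, P i y⟫)
    (hcomm : ∀ i j, P i * P j = P j * P i)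
    (Y B : H)
    (hB : ∀ i, ‖Y - P i Y‖ ≤ ‖Y - B‖) :
    ‖Y - ((List.finRange d).map P).prod Y‖ ^ 2 ≤ ∑ i, ‖Y - P i Y‖ ^ 2 ∧
    ‖Y - ((List.finRange d).map P).prod Y‖ ≤ Real.sqrt d * ‖Y - B‖ :=
  hosvd_quasi_optimal_general P hidem hself Y B hB
end

section
/- With P_S the tangent-space projector at rank-r matrix X_l (as above) and T a rank-r matrix with smallest nonzero singular value σ_r(T) > 0, it holds that ‖(I − P_S)T‖_F ≤ (‖T − X_l‖_F² ) / σ_r(T). (Matrix case d = 2 of the tangent space approximation lemma, where 2^d − 1 = 3 improves to 1 in the matrix case.) -/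
/-!
Write `M = T - X_l`, `Q₁ = 1 - U_l U_lᵀ`, `Q₂ = 1 - V_l V_lᵀ`. As `Q₁ X_l = 0 = X_l Q₂`,
`(I - P_S) T = Q₁ T Q₂`, and `T = U C Vᵀ` factors it as `(Q₁ M V) (Vᵀ Q₂)` with
`C (Vᵀ Q₂) = Uᵀ M Q₂`. Multiplying by a partial isometry does not increase the Frobenius norm,
so `‖Q₁ M V‖ ≤ ‖M‖` and `σ ‖Vᵀ Q₂‖ ≤ ‖Uᵀ M Q₂‖ ≤ ‖M‖`; submultiplicativity concludes.
-/

open Matrix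

attribute [local instance] Matrix.frobeniusNormedAddCommGroup

namespace Matrix

variable {l m n k : Type*} [Fintype l] [Fintype m] [Fintype n] [Fintype k]

/-- The tangent-space projection `P_S` at a matrix with column space `U` and row space `V`. -/
def tangentProj (U : Matrix m k ℝ) (V : Matrix n l ℝ) (Z : Matrix m n ℝ) :
    Matrix m n ℝ :=
  U * Uᵀ * Z + Z * (V * Vᵀ) - U * Uᵀ * Z * (V * Vᵀ)

theorem sub_tangentProj_eq [DecidableEq m] [DecidableEq n] (U : Matrix m k ℝ)
    (V : Matrix n l ℝ) (Z : Matrix m n ℝ) :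
    Z - tangentProj U V Z = (1 - U * Uᵀ) * Z * (1 - V * Vᵀ) := by
  simp only [tangentProj, Matrix.mul_sub, Matrix.sub_mul, Matrix.mul_one, Matrix.one_mul,
    Matrix.mul_assoc]
  abel

theorem frobenius_norm_sq_eq_sum (A : Matrix m n ℝ) : ‖A‖ ^ 2 = ∑ i, ∑ j, A i j ^ 2 := by
  rw [frobenius_norm_def, ← Real.rpow_natCast, ← Real.rpow_mul (by positivity)]
  norm_num [Real.norm_eq_abs, sq_abs]

theorem frobenius_norm_sq_eq_trace (A : Matrix m n ℝ) : ‖A‖ ^ 2 = trace (A * Aᵀ) := by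
  rw [frobenius_norm_sq_eq_sum]
  simp [trace, mul_apply, sq]

theorem frobenius_norm_sq_eq_sum_replicateCol (A : Matrix m n ℝ) :
    ‖A‖ ^ 2 = ∑ j, ‖replicateCol (Fin 1) (Aᵀ j)‖ ^ 2 := by
  simp only [frobenius_norm_sq_eq_sum, replicateCol_apply, transpose_apply,
    Finset.univ_unique, Finset.sum_singleton]
  exact Finset.sum_comm

theorem le_frobenius_norm_mul_of_forall_col {σ : ℝ} (hσ : 0 ≤ σ) (C : Matrix m n ℝ)
    (hC : ∀ v : Matrix n (Fin 1) ℝ, σ * ‖v‖ ≤ ‖C * v‖) (A : Matrix n k ℝ) :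
    σ * ‖A‖ ≤ ‖C * A‖ := by
  refine (pow_le_pow_iff_left₀ (by positivity) (norm_nonneg _) two_ne_zero).mp ?_
  rw [mul_pow, frobenius_norm_sq_eq_sum_replicateCol, frobenius_norm_sq_eq_sum_replicateCol,
    Finset.mul_sum]
  refine Finset.sum_le_sum fun j _ => ?_
  have hcol : replicateCol (Fin 1) ((C * A)ᵀ j) = C * replicateCol (Fin 1) (Aᵀ j) := by
    ext i _
    simp [mul_apply, mul_comm]
  rw [← mul_pow, hcol]
  exact pow_le_pow_left₀ (by positivity) (hC _) 2

/-- `W Wᵀ` is idempotent exactly when `W` is a partial isometry. -/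
theorem frobenius_norm_mul_le_of_isIdempotentElem [DecidableEq n] (B : Matrix m n ℝ)
    (W : Matrix n k ℝ) (hW : IsIdempotentElem (W * Wᵀ)) : ‖B * W‖ ≤ ‖B‖ := by
  set P := W * Wᵀ
  have hBW : ‖B * W‖ ^ 2 = trace (B * P * Bᵀ) := by
    simp only [frobenius_norm_sq_eq_trace, transpose_mul, P, Matrix.mul_assoc]
  have hBQ : ‖B * (1 - P)‖ ^ 2 = trace (B * (1 - P) * Bᵀ) := by
    have hQ : (1 - P) * (1 - P)ᵀ = 1 - P := by
      have hPt : Pᵀ = P := by simp [P]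
      rw [transpose_sub, transpose_one, hPt]
      exact hW.one_sub.eq
    rw [frobenius_norm_sq_eq_trace, transpose_mul, Matrix.mul_assoc, ← Matrix.mul_assoc (1 - P),
      hQ, Matrix.mul_assoc]
  have hsum : ‖B * W‖ ^ 2 + ‖B * (1 - P)‖ ^ 2 = ‖B‖ ^ 2 := by
    rw [hBW, hBQ, ← trace_add, ← Matrix.add_mul, ← Matrix.mul_add, add_sub_cancel,
      Matrix.mul_one, frobenius_norm_sq_eq_trace]
  exact (pow_le_pow_iff_left₀ (norm_nonneg _) (norm_nonneg _) two_ne_zero).mp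
    (hsum ▸ le_add_of_nonneg_right (sq_nonneg _))

theorem frobenius_norm_mul_le_of_isIdempotentElem' [DecidableEq m] (W : Matrix k m ℝ)
    (B : Matrix m n ℝ) (hW : IsIdempotentElem (Wᵀ * W)) : ‖W * B‖ ≤ ‖B‖ := by
  rw [← frobenius_norm_transpose, transpose_mul, ← frobenius_norm_transpose B]
  exact frobenius_norm_mul_le_of_isIdempotentElem _ _ (by rwa [transpose_transpose])

theorem isIdempotentElem_mul_transpose [DecidableEq k] {V : Matrix n k ℝ} (hV : Vᵀ * V = 1) :
    IsIdempotentElem (V * Vᵀ) := by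
  rw [IsIdempotentElem, Matrix.mul_assoc, ← Matrix.mul_assoc Vᵀ, hV, Matrix.one_mul]

theorem isIdempotentElem_one_sub_mul_transpose [DecidableEq n] [DecidableEq k]
    {V : Matrix n k ℝ} (hV : Vᵀ * V = 1) :
    IsIdempotentElem ((1 - V * Vᵀ) * (1 - V * Vᵀ)ᵀ) := by
  have h := (isIdempotentElem_mul_transpose hV).one_sub
  simpa [h.eq] using h

theorem one_sub_mul_transpose_mul_eq_zero [DecidableEq m] [DecidableEq k] {p : Type*}
    {U : Matrix m k ℝ} (hU : Uᵀ * U = 1) (B : Matrix k p ℝ) : (1 - U * Uᵀ) * (U * B) = 0 := by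
  rw [Matrix.sub_mul, Matrix.one_mul, Matrix.mul_assoc, ← Matrix.mul_assoc Uᵀ, hU,
    Matrix.one_mul, sub_self]

theorem mul_transpose_mul_one_sub_eq_zero [DecidableEq n] [DecidableEq k] {p : Type*}
    {V : Matrix n k ℝ} (hV : Vᵀ * V = 1) (B : Matrix p k ℝ) : B * Vᵀ * (1 - V * Vᵀ) = 0 := by
  rw [Matrix.mul_sub, Matrix.mul_one, Matrix.mul_assoc, ← Matrix.mul_assoc Vᵀ, hV,
    Matrix.one_mul, sub_self]

theorem frobenius_norm_mul_mul_le_sq_div [DecidableEq m] [DecidableEq n] [DecidableEq k]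
    {U : Matrix m k ℝ} {V : Matrix n k ℝ} {C : Matrix k k ℝ} {Q₁ : Matrix m m ℝ}
    {Q₂ : Matrix n n ℝ} {X : Matrix m n ℝ} {σ : ℝ} (hσ : 0 < σ)
    (hC : ∀ v : Matrix k (Fin 1) ℝ, σ * ‖v‖ ≤ ‖C * v‖) (hU : Uᵀ * U = 1) (hV : Vᵀ * V = 1)
    (hQ₁ : IsIdempotentElem (Q₁ᵀ * Q₁)) (hQ₂ : IsIdempotentElem (Q₂ * Q₂ᵀ))
    (hQ₁X : Q₁ * X = 0) (hXQ₂ : X * Q₂ = 0) :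
    ‖Q₁ * (U * C * Vᵀ) * Q₂‖ ≤ ‖U * C * Vᵀ - X‖ ^ 2 / σ := by
  set M := U * C * Vᵀ - X
  have hleft : Q₁ * M * V = Q₁ * U * C := by
    simp only [M, Matrix.mul_sub, hQ₁X, sub_zero, Matrix.mul_assoc, hV, Matrix.mul_one]
  have hright : C * (Vᵀ * Q₂) = Uᵀ * M * Q₂ := by
    simp only [M, Matrix.mul_sub, Matrix.sub_mul, Matrix.mul_assoc, hXQ₂, Matrix.mul_zero,
      sub_zero, ← Matrix.mul_assoc Uᵀ U, hU, Matrix.one_mul]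
  have hfactor : Q₁ * (U * C * Vᵀ) * Q₂ = Q₁ * M * V * (Vᵀ * Q₂) := by
    simp only [hleft, Matrix.mul_assoc]
  have hleft_le : ‖Q₁ * M * V‖ ≤ ‖M‖ :=
    (frobenius_norm_mul_le_of_isIdempotentElem _ V (isIdempotentElem_mul_transpose hV)).trans
      (frobenius_norm_mul_le_of_isIdempotentElem' Q₁ M hQ₁)
  have hright_le : ‖Vᵀ * Q₂‖ ≤ ‖M‖ / σ := by
    rw [le_div_iff₀' hσ]
    calc σ * ‖Vᵀ * Q₂‖ ≤ ‖C * (Vᵀ * Q₂)‖ := le_frobenius_norm_mul_of_forall_col hσ.le C hC _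
      _ = ‖Uᵀ * (M * Q₂)‖ := by rw [hright, Matrix.mul_assoc]
      _ ≤ ‖M * Q₂‖ := frobenius_norm_mul_le_of_isIdempotentElem' _ _ (by
          rw [transpose_transpose]; exact isIdempotentElem_mul_transpose hU)
      _ ≤ ‖M‖ := frobenius_norm_mul_le_of_isIdempotentElem M Q₂ hQ₂
  calc ‖Q₁ * (U * C * Vᵀ) * Q₂‖ ≤ ‖Q₁ * M * V‖ * ‖Vᵀ * Q₂‖ := hfactor ▸ frobenius_norm_mul _ _
    _ ≤ ‖M‖ * (‖M‖ / σ) := by gcongr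
    _ = ‖M‖ ^ 2 / σ := by ring

end Matrix

theorem frobNorm_eq_norm {p q : ℕ} (A : Matrix (Fin p) (Fin q) ℝ) : frobNorm A = ‖A‖ := by
  rw [frobNorm, ← frobenius_norm_sq_eq_sum, Real.sqrt_sq (norm_nonneg A)]

theorem tangent_space_approximation_general {n₁ n₂ r : ℕ}
    (Ul U : Matrix (Fin n₁) (Fin r) ℝ) (Vl V : Matrix (Fin n₂) (Fin r) ℝ)
    (Cl C : Matrix (Fin r) (Fin r) ℝ)
    (T Xl : Matrix (Fin n₁) (Fin n₂) ℝ)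
    (hUl : Ulᵀ * Ul = 1) (hVl : Vlᵀ * Vl = 1)
    (hU : Uᵀ * U = 1) (hV : Vᵀ * V = 1)
    (hXl : Xl = Ul * Cl * Vlᵀ) (hT : T = U * C * Vᵀ)
    (σr : ℝ) (hσpos : 0 < σr)
    (hσ : ∀ v : Matrix (Fin r) (Fin 1) ℝ, σr * frobNorm v ≤ frobNorm (C * v))
    (P : Matrix (Fin n₁) (Fin n₂) ℝ → Matrix (Fin n₁) (Fin n₂) ℝ)
    (hP : ∀ Z, P Z = Ul * Ulᵀ * Z + Z * (Vl * Vlᵀ) - Ul * Ulᵀ * Z * (Vl * Vlᵀ)) :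
    frobNorm (T - P T) ≤ frobNorm (T - Xl) ^ 2 / σr := by
  simp only [frobNorm_eq_norm] at hσ ⊢
  have hPT : P T = tangentProj Ul Vl T := hP T
  rw [hPT, sub_tangentProj_eq, hT]
  refine frobenius_norm_mul_mul_le_sq_div hσpos hσ hU hV ?_
    (isIdempotentElem_one_sub_mul_transpose hVl) ?_ ?_
  · simpa using isIdempotentElem_one_sub_mul_transpose hUl
  · rw [hXl, Matrix.mul_assoc]
    exact one_sub_mul_transpose_mul_eq_zero hUl _
  · rw [hXl]
    exact mul_transpose_mul_one_sub_eq_zero hVl _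

/-- tangent-space approximation bound in the matrix case:
`‖(I − P_S)T‖_F ≤ ‖T − X_l‖_F² / σ_r(T)`, where `σr` is a positive lower bound for the
nonzero singular values of the rank-`r` matrix `T = U C Vᵀ`. -/
theorem tangent_space_approximation {n₁ n₂ r : ℕ}
    (Ul U : Matrix (Fin n₁) (Fin r) ℝ) (Vl V : Matrix (Fin n₂) (Fin r) ℝ)
    (Cl C : Matrix (Fin r) (Fin r) ℝ)
    (T Xl : Matrix (Fin n₁) (Fin n₂) ℝ)
    (hUl : Ulᵀ * Ul = 1) (hVl : Vlᵀ * Vl = 1)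
    (hU : Uᵀ * U = 1) (hV : Vᵀ * V = 1)
    (hXl : Xl = Ul * Cl * Vlᵀ) (hT : T = U * C * Vᵀ)
    (hrankT : T.rank = r) (hrankXl : Xl.rank = r)
    (σr : ℝ) (hσpos : 0 < σr)
    (hσ : ∀ v : Matrix (Fin r) (Fin 1) ℝ, σr * frobNorm v ≤ frobNorm (C * v))
    (P : Matrix (Fin n₁) (Fin n₂) ℝ → Matrix (Fin n₁) (Fin n₂) ℝ)
    (hP : ∀ Z, P Z = Ul * Ulᵀ * Z + Z * (Vl * Vlᵀ) - Ul * Ulᵀ * Z * (Vl * Vlᵀ)) :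
    frobNorm (T - P T) ≤ frobNorm (T - Xl) ^ 2 / σr :=
  tangent_space_approximation_general Ul U Vl V Cl C T Xl hUl hVl hU hV hXl hT σr hσpos hσ P hP
end

section
/- The dimension of the manifold M_r of tensors in ℝ^{n₁×…×n_d} of multilinear rank exactly r = (r₁,…,r_d) equals ∏_{i=1}^d r_i + Σ_{j=1}^d (r_j n_j − r_j²). In the matrix case d = 2 this recovers the well-known dimension r(n₁ + n₂ − r) of the rank-r matrix manifold. -/
open Matrix

/-- All-modes (Tucker) multilinear product: `(B ×₁ V⁽¹⁾ ⋯ ×_d V⁽ᵈ⁾)`. -/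
noncomputable def tuckerMul {d : ℕ} {n r : Fin d → ℕ}
    (B : ((i : Fin d) → Fin (r i)) → ℝ)
    (V : (i : Fin d) → Matrix (Fin (n i)) (Fin (r i)) ℝ) :
    ((i : Fin d) → Fin (n i)) → ℝ :=
  fun j => ∑ k : (i : Fin d) → Fin (r i), (∏ i, V i (j i) (k i)) * B k

/-- Mode-`i` matricization (unfolding) of a tensor. -/
def modeUnfold {d : ℕ} {r : Fin d → ℕ} (i : Fin d)
    (B : ((j : Fin d) → Fin (r j)) → ℝ) :
    Matrix (Fin (r i)) ((j : {j : Fin d // j ≠ i}) → Fin (r j.1)) ℝ :=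
  fun a k => B (fun j => if h : j = i then Fin.cast (congrArg r h).symm a else k ⟨j, h⟩)

/-!
The tangent space is the image of the linear map `(Ḃ, V̇) ↦ Ḃ ×V + Σᵢ B ×_{j≠i} V⁽ʲ⁾ ×ᵢ V̇⁽ⁱ⁾`,
defined on the core tensors times the spaces `{V̇⁽ⁱ⁾ | (V⁽ⁱ⁾)ᵀ V̇⁽ⁱ⁾ = 0}` of dimension
`nᵢ rᵢ - rᵢ²`, so it suffices that this map is injective. Multiplying a vanishing image by
`(V⁽ʲ⁾)ᵀ` in every mode kills all `V̇`-terms and leaves `Ḃ`; multiplying instead by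
`(V̇⁽ⁱ⁾)ᵀ` in mode `i` and `(V⁽ʲ⁾)ᵀ` elsewhere kills everything but the `i`-th term,
leaving `B ×ᵢ (V̇⁽ⁱ⁾)ᵀ V̇⁽ⁱ⁾`, whose mode-`i` unfolding is `(V̇⁽ⁱ⁾)ᵀ V̇⁽ⁱ⁾ B₍ᵢ₎`.
As `B₍ᵢ₎` has full row rank, `V̇⁽ⁱ⁾ = 0`.
-/

open Function

section LinearAlgebra

variable {K : Type*} [Field K] {l m n : Type*}

theorem Matrix.eq_zero_of_rank_eq_zero [Fintype n] {A : Matrix m n K} (h : A.rank = 0) :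
    A = 0 := by
  classical
  have hrange : LinearMap.range A.mulVecLin = ⊥ := Submodule.finrank_eq_zero.mp h
  ext i j
  simpa using congrFun (LinearMap.congr_fun (LinearMap.range_eq_bot.mp hrange) (Pi.single j 1)) i

theorem Matrix.eq_zero_of_mul_eq_zero_of_rank_eq_card [Finite l] [Fintype m] [Fintype n]
    {A : Matrix l m K} {U : Matrix m n K} (hAU : A * U = 0) (hU : U.rank = Fintype.card m) :
    A = 0 :=
  Matrix.eq_zero_of_rank_eq_zero <| by
    have := Matrix.rank_add_rank_le_card_of_mul_eq_zero hAU
    omega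

theorem finrank_ker_mulLeftLinearMap_transpose [Fintype l] [Fintype m] [Fintype n]
    [DecidableEq n] {V : Matrix m n K} (hV : Vᵀ * V = 1) :
    Module.finrank K (LinearMap.ker (mulLeftLinearMap l K Vᵀ))
      = Fintype.card m * Fintype.card l - Fintype.card n * Fintype.card l := by
  have hsurj : Surjective (mulLeftLinearMap l K Vᵀ) := fun X =>
    ⟨V * X, by simp [← Matrix.mul_assoc, hV]⟩
  have := LinearMap.finrank_range_add_finrank_ker (mulLeftLinearMap l K Vᵀ)
  rw [LinearMap.range_eq_top.mpr hsurj, finrank_top, Module.finrank_matrix,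
    Module.finrank_matrix, Module.finrank_self] at this
  omega

end LinearAlgebra

abbrev Tensor {d : ℕ} (n : Fin d → ℕ) : Type := ((i : Fin d) → Fin (n i)) → ℝ

section Tucker

variable {d : ℕ} {m n r : Fin d → ℕ}

noncomputable def tuckerMulₗ (U : (i : Fin d) → Matrix (Fin (n i)) (Fin (r i)) ℝ) :
    Tensor r →ₗ[ℝ] Tensor n where
  toFun C := tuckerMul C U
  map_add' C C' := by
    funext j
    simp [tuckerMul, mul_add, Finset.sum_add_distrib]
  map_smul' c C := by
    funext j
    simp [tuckerMul, Finset.mul_sum, mul_left_comm]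

noncomputable def tuckerMulMultilinear (C : Tensor r) :
    MultilinearMap ℝ (fun i => Matrix (Fin (n i)) (Fin (r i)) ℝ) (Tensor n) :=
  MultilinearMap.pi fun j => ∑ k, C k •
    (MultilinearMap.mkPiAlgebra ℝ (Fin d) ℝ).compLinearMap
      fun i => Matrix.entryLinearMap ℝ ℝ (j i) (k i)

@[simp]
theorem tuckerMulMultilinear_apply (C : Tensor r)
    (U : (i : Fin d) → Matrix (Fin (n i)) (Fin (r i)) ℝ) :
    tuckerMulMultilinear C U = tuckerMul C U := by
  funext j
  simp [tuckerMulMultilinear, tuckerMul, mul_comm]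

theorem tuckerMul_tuckerMul (C : Tensor r) (U : (i : Fin d) → Matrix (Fin (n i)) (Fin (r i)) ℝ)
    (W : (i : Fin d) → Matrix (Fin (m i)) (Fin (n i)) ℝ) :
    tuckerMul (tuckerMul C U) W = tuckerMul C fun i => W i * U i := by
  funext j
  simp only [tuckerMul, Matrix.mul_apply, Fintype.prod_sum, Finset.mul_sum, Finset.sum_mul]
  rw [Finset.sum_comm]
  refine Finset.sum_congr rfl fun k _ => Finset.sum_congr rfl fun l _ => ?_
  rw [Finset.prod_mul_distrib]
  ring

theorem tuckerMul_one (C : Tensor r) : tuckerMul C 1 = C := by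
  funext j
  simp [tuckerMul, Matrix.one_apply, Fintype.prod_boole, ← funext_iff]

theorem tuckerMul_eq_zero_of_apply_eq_zero (C : Tensor r)
    {U : (i : Fin d) → Matrix (Fin (n i)) (Fin (r i)) ℝ} {i : Fin d} (h : U i = 0) :
    tuckerMul C U = 0 := by
  funext j
  simp [tuckerMul, Finset.prod_eq_zero (Finset.mem_univ i), h]

theorem tuckerMul_tuckerMul_eq_zero (C : Tensor r)
    {U : (i : Fin d) → Matrix (Fin (n i)) (Fin (r i)) ℝ}
    {W : (i : Fin d) → Matrix (Fin (m i)) (Fin (n i)) ℝ} {i : Fin d} (h : W i * U i = 0) :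
    tuckerMul (tuckerMul C U) W = 0 := by
  rw [tuckerMul_tuckerMul]
  exact tuckerMul_eq_zero_of_apply_eq_zero C h

theorem modeUnfold_apply (i : Fin d) (C : Tensor r) (a : Fin (r i))
    (k : (j : {j : Fin d // j ≠ i}) → Fin (r j.1)) :
    modeUnfold i C a k = C ((Equiv.piSplitAt i fun j => Fin (r j)).symm (a, k)) := by
  unfold modeUnfold
  congr 1
  funext j
  by_cases h : j = i
  · subst h; simp
  · simp [h]

theorem modeUnfold_tuckerMul_update_one (C : Tensor r) (i : Fin d)
    (M : Matrix (Fin (r i)) (Fin (r i)) ℝ) :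
    modeUnfold i (tuckerMul C (update 1 i M)) = M * modeUnfold i C := by
  ext a k
  rw [modeUnfold_apply, tuckerMul]
  set e := Equiv.piSplitAt i fun j => Fin (r j)
  have he_self (p) : e.symm p i = p.1 := congrArg Prod.fst (e.apply_symm_apply p)
  have he_ne (p) (l : {l // l ≠ i}) : e.symm p l = p.2 l :=
    congrFun (congrArg Prod.snd (e.apply_symm_apply p)) l
  have hone (l : {l // l ≠ i}) :
      update (1 : (l : Fin d) → Matrix (Fin (r l)) (Fin (r l)) ℝ) i M l = 1 :=
    update_of_ne l.2 _ _
  have hprod (b k') : ∏ l, update (1 : (l : Fin d) → Matrix (Fin (r l)) (Fin (r l)) ℝ) i M l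
      (e.symm (a, k) l) (e.symm (b, k') l) = if k = k' then M a b else 0 := by
    rw [Fintype.prod_eq_mul_prod_subtype_ne _ i]
    simp [he_self, he_ne, hone, Matrix.one_apply, Fintype.prod_boole, ← funext_iff]
  rw [← e.symm.sum_comp, Fintype.sum_prod_type, Finset.sum_comm]
  simp only [hprod, ite_mul, zero_mul]
  simp [Matrix.mul_apply, modeUnfold_apply, e]

theorem eq_zero_of_tuckerMul_update_one_eq_zero {C : Tensor r} {i : Fin d}
    (hC : (modeUnfold i C).rank = r i) {M : Matrix (Fin (r i)) (Fin (r i)) ℝ}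
    (h : tuckerMul C (update 1 i M) = 0) : M = 0 := by
  have hMC : M * modeUnfold i C = 0 := by
    rw [← modeUnfold_tuckerMul_update_one, h]
    rfl
  exact Matrix.eq_zero_of_mul_eq_zero_of_rank_eq_card hMC (by simpa using hC)

theorem eq_zero_of_tuckerMul_add_sum_tuckerMul_update_eq_zero {B : Tensor r}
    {V : (i : Fin d) → Matrix (Fin (n i)) (Fin (r i)) ℝ} (hV : ∀ i, (V i)ᵀ * V i = 1)
    (hB : ∀ i, (modeUnfold i B).rank = r i) {Bdot : Tensor r}
    {A : (i : Fin d) → Matrix (Fin (n i)) (Fin (r i)) ℝ} (hVA : ∀ i, (V i)ᵀ * A i = 0)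
    (h : tuckerMul Bdot V + ∑ i, tuckerMul B (update V i (A i)) = 0) :
    Bdot = 0 ∧ ∀ i, A i = 0 := by
  have hAV (i) : (A i)ᵀ * V i = 0 := by simpa using congrArg Matrix.transpose (hVA i)
  have project (W : (i : Fin d) → Matrix (Fin (r i)) (Fin (n i)) ℝ) :
      tuckerMul (tuckerMul Bdot V) W + ∑ j, tuckerMul (tuckerMul B (update V j (A j))) W = 0 := by
    have := congrArg (tuckerMulₗ W) h
    rw [map_add, map_sum, map_zero] at this
    exact this
  refine ⟨?_, fun i => ?_⟩
  · have := project fun i => (V i)ᵀ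
    rwa [Finset.sum_eq_zero fun j _ =>
        tuckerMul_tuckerMul_eq_zero B (i := j) (by simpa using hVA j),
      tuckerMul_tuckerMul, add_zero, (funext hV : (fun i => (V i)ᵀ * V i) = 1),
      tuckerMul_one] at this
  · set W := update (fun i => (V i)ᵀ) i (A i)ᵀ
    have hW : (fun l => W l * update V i (A i) l)
        = update (1 : (l : Fin d) → Matrix (Fin (r l)) (Fin (r l)) ℝ) i ((A i)ᵀ * A i) := by
      funext l
      by_cases hl : l = i
      · subst hl; simp [W]
      · simp [W, hl, hV]
    have := project W
    rw [tuckerMul_tuckerMul_eq_zero Bdot (i := i) (by simpa [W] using hAV i), zero_add,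
      Finset.sum_eq_single i (fun j _ hj => tuckerMul_tuckerMul_eq_zero B (i := j)
        (by simpa [W, hj] using hVA j)) (by simp), tuckerMul_tuckerMul, hW] at this
    have hAA := eq_zero_of_tuckerMul_update_one_eq_zero (hB i) this
    simpa [Matrix.conjTranspose_eq_transpose_of_trivial] using
      Matrix.conjTranspose_mul_self_eq_zero.mp hAA

noncomputable def tuckerTangentMap (B : Tensor r)
    (V : (i : Fin d) → Matrix (Fin (n i)) (Fin (r i)) ℝ) :
    Tensor r × ((i : Fin d) → LinearMap.ker (mulLeftLinearMap (Fin (r i)) ℝ (V i)ᵀ))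
      →ₗ[ℝ] Tensor n :=
  (tuckerMulₗ V).coprod <| ∑ i, (tuckerMulMultilinear B).toLinearMap V i ∘ₗ
    (LinearMap.ker _).subtype ∘ₗ LinearMap.proj i

theorem tuckerTangentMap_apply (B : Tensor r)
    (V : (i : Fin d) → Matrix (Fin (n i)) (Fin (r i)) ℝ) (p) :
    tuckerTangentMap B V p = tuckerMul p.1 V + ∑ i, tuckerMul B (update V i (p.2 i)) := by
  simp [tuckerTangentMap, tuckerMulₗ]

theorem tuckerTangentMap_injective {B : Tensor r}
    {V : (i : Fin d) → Matrix (Fin (n i)) (Fin (r i)) ℝ} (hV : ∀ i, (V i)ᵀ * V i = 1)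
    (hB : ∀ i, (modeUnfold i B).rank = r i) : Injective (tuckerTangentMap B V) := by
  rw [← LinearMap.ker_eq_bot, LinearMap.ker_eq_bot']
  rintro ⟨Bdot, A⟩ h
  rw [tuckerTangentMap_apply] at h
  obtain ⟨hBdot, hA⟩ :=
    eq_zero_of_tuckerMul_add_sum_tuckerMul_update_eq_zero hV hB (fun i => (A i).2) h
  exact Prod.ext hBdot (funext fun i => Subtype.ext (hA i))

theorem range_tuckerTangentMap (B : Tensor r)
    (V : (i : Fin d) → Matrix (Fin (n i)) (Fin (r i)) ℝ) :
    (LinearMap.range (tuckerTangentMap B V) : Set (Tensor n)) =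
      {X | ∃ (Bdot : Tensor r) (Vdot : (i : Fin d) → Matrix (Fin (n i)) (Fin (r i)) ℝ),
        (∀ i, (Vdot i)ᵀ * V i = 0) ∧
          X = tuckerMul Bdot V + ∑ i, tuckerMul B (update V i (Vdot i))} := by
  have hker {i : Fin d} {A : Matrix (Fin (n i)) (Fin (r i)) ℝ} :
      A ∈ LinearMap.ker (mulLeftLinearMap (Fin (r i)) ℝ (V i)ᵀ) ↔ Aᵀ * V i = 0 := by
    rw [LinearMap.mem_ker, mulLeftLinearMap_apply, ← Matrix.transpose_eq_zero,
      Matrix.transpose_mul, Matrix.transpose_transpose]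
  ext X
  simp only [SetLike.mem_coe, LinearMap.mem_range, tuckerTangentMap_apply]
  constructor
  · rintro ⟨⟨Bdot, A⟩, rfl⟩
    exact ⟨Bdot, fun i => A i, fun i => hker.mp (A i).2, rfl⟩
  · rintro ⟨Bdot, Vdot, hVdot, rfl⟩
    exact ⟨(Bdot, fun i => ⟨Vdot i, hker.mpr (hVdot i)⟩), rfl⟩

end Tucker

theorem dimension_of_multilinear_rank_manifold_general {d : ℕ} (n r : Fin d → ℕ)
    (B : ((i : Fin d) → Fin (r i)) → ℝ)
    (V : (i : Fin d) → Matrix (Fin (n i)) (Fin (r i)) ℝ)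
    (hV : ∀ i, (V i)ᵀ * V i = 1)
    (hB : ∀ i, (modeUnfold i B).rank = r i) :
    Module.finrank ℝ
      (Submodule.span ℝ
        {X : ((i : Fin d) → Fin (n i)) → ℝ |
          ∃ (Bdot : ((i : Fin d) → Fin (r i)) → ℝ)
            (Vdot : (i : Fin d) → Matrix (Fin (n i)) (Fin (r i)) ℝ),
            (∀ i, (Vdot i)ᵀ * V i = 0) ∧
            X = tuckerMul Bdot V +
              ∑ i, tuckerMul B (Function.update V i (Vdot i))})
      = ∏ i, r i + ∑ j, (r j * n j - (r j) ^ 2) := by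
  rw [← range_tuckerTangentMap, Submodule.span_eq,
    LinearMap.finrank_range_of_inj (tuckerTangentMap_injective hV hB), Module.finrank_prod,
    Module.finrank_fintype_fun_eq_card, Fintype.card_pi, Module.finrank_pi_fintype]
  congr 1
  · simp
  · refine Finset.sum_congr rfl fun i _ => ?_
    rw [finrank_ker_mulLeftLinearMap_transpose (hV i)]
    simp [mul_comm, sq]

/-- the dimension of the manifold of tensors of multilinear rank exactly
`r = (r₁, …, r_d)` equals `∏ᵢ rᵢ + Σⱼ (rⱼ nⱼ − rⱼ²)`, computed as the dimension of its
tangent space at `X = B ×₁V⁽¹⁾ ⋯ ×_d V⁽ᵈ⁾` (with `V⁽ⁱ⁾` orthonormal columns and core `B`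
of full multilinear rank), which consists of `Ḃ ×ᵢ V⁽ⁱ⁾` plus the `d` terms
`B ×_{j≠i} V⁽ʲ⁾ ×ᵢ V̇⁽ⁱ⁾` with `(V̇⁽ⁱ⁾)ᵀ V⁽ⁱ⁾ = 0`. -/
theorem dimension_of_multilinear_rank_manifold {d : ℕ} (n r : Fin d → ℕ)
    (hrn : ∀ i, r i ≤ n i)
    (B : ((i : Fin d) → Fin (r i)) → ℝ)
    (V : (i : Fin d) → Matrix (Fin (n i)) (Fin (r i)) ℝ)
    (hV : ∀ i, (V i)ᵀ * V i = 1)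
    (hB : ∀ i, (modeUnfold i B).rank = r i) :
    Module.finrank ℝ
      (Submodule.span ℝ
        {X : ((i : Fin d) → Fin (n i)) → ℝ |
          ∃ (Bdot : ((i : Fin d) → Fin (r i)) → ℝ)
            (Vdot : (i : Fin d) → Matrix (Fin (n i)) (Fin (r i)) ℝ),
            (∀ i, (Vdot i)ᵀ * V i = 0) ∧
            X = tuckerMul Bdot V +
              ∑ i, tuckerMul B (Function.update V i (Vdot i))})
      = ∏ i, r i + ∑ j, (r j * n j - (r j) ^ 2) :=
  dimension_of_multilinear_rank_manifold_general n r B V hV hB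
end
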